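/- If f = f_m ∘ f_{m−1} ∘ ⋯ ∘ f_1 is a composition of fundamental translations of B_n with f(a) = b_n and f(a) ≠ f(0), then m ≥ n − 1. In particular, any unary polynomial of B_n generated by fundamental translations witnessing a Maltsev chain step from a to 0 producing b_n has nesting depth at least n − 1, so the Maltsev depth of B_n is at least n − 1. -/

import Mathlib

/-- The three-element set `M = {0, D, ∂D}`. -/
inductive Mc : Type
  | z : Mc
  | D : Mc
  | pD : Mc
deriving DecidableEq

/-- The fixed-point-free involution `∂` exchanging `D` and `∂D`
(its value on `0` is irrelevant to the operations below). -/
def pd : Mc → Mc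
  | Mc.D => Mc.pD
  | Mc.pD => Mc.D
  | Mc.z => Mc.z

/-- Height-1 meet on `M`: `x ∧ y = x` if `x = y`, else `0`. -/
def mmt (x y : Mc) : Mc := if x = y then x else Mc.z

/-- `J(x,y,w) = x` if `x = y`; `x ∧ w` if `x = ∂y`; `0` otherwise. -/
def mJ (x y w : Mc) : Mc := if x = y then x else if x = pd y then mmt x w else Mc.z

/-- `J'(x,y,w) = x ∧ w` if `x = y`; `x` if `x = ∂y`; `0` otherwise. -/
def mJ' (x y w : Mc) : Mc := if x = y then mmt x w else if x = pd y then x else Mc.z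

/-- Pointwise meet on `M^n`. -/
def vmt {n : ℕ} (x y : Fin n → Mc) : Fin n → Mc := fun l => mmt (x l) (y l)

/-- Pointwise `J` on `M^n`. -/
def vJ {n : ℕ} (x y w : Fin n → Mc) : Fin n → Mc := fun l => mJ (x l) (y l) (w l)

/-- Pointwise `J'` on `M^n`. -/
def vJ' {n : ℕ} (x y w : Fin n → Mc) : Fin n → Mc := fun l => mJ' (x l) (y l) (w l)

/-- The zero tuple in `M^n`. -/
def vz (n : ℕ) : Fin n → Mc := fun _ => Mc.z

/-- `b_i`: `D` in (1-indexed) coordinates `1..i`, `0` afterwards. -/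
def vb (n i : ℕ) : Fin n → Mc := fun l => if l.val < i then Mc.D else Mc.z

/-- `d_i`: `D` in coordinates `1..i-1`, `∂D` in coordinate `i`, `0` afterwards. -/
def vd (n i : ℕ) : Fin n → Mc := fun l =>
  if l.val + 1 < i then Mc.D else if l.val + 1 = i then Mc.pD else Mc.z

/-- `c_i`: `0` in coordinate `1`, `D` in coordinates `2..i`, `0` afterwards. -/
def vc (n i : ℕ) : Fin n → Mc := fun l =>
  if l.val = 0 then Mc.z else if l.val < i then Mc.D else Mc.z

/-- `a = b_1 = (D,0,…,0)`. -/
def va (n : ℕ) : Fin n → Mc := vb n 1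

/-- The subuniverse `B_n` of `M^n`, generated by `{a} ∪ {b_i, d_i : 2 ≤ i ≤ n}`
under the pointwise operations `∧`, `J`, `J'`. -/
inductive Bn (n : ℕ) : (Fin n → Mc) → Prop
  | gen_a : Bn n (va n)
  | gen_b (i : ℕ) (h2 : 2 ≤ i) (hn : i ≤ n) : Bn n (vb n i)
  | gen_d (i : ℕ) (h2 : 2 ≤ i) (hn : i ≤ n) : Bn n (vd n i)
  | cmt {x y} : Bn n x → Bn n y → Bn n (vmt x y)
  | cJ {x y w} : Bn n x → Bn n y → Bn n w → Bn n (vJ x y w)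
  | cJ' {x y w} : Bn n x → Bn n y → Bn n w → Bn n (vJ' x y w)

/-- The congruence of the algebra with universe `C` (a subuniverse of `M^n`) generated by the
pair `(a, b)`: the smallest equivalence relation on `C` containing `(a,b)` and compatible with
the operations `∧`, `J`, `J'`. -/
inductive CgC {n : ℕ} (C : (Fin n → Mc) → Prop) (a b : Fin n → Mc) :
    (Fin n → Mc) → (Fin n → Mc) → Prop
  | base : CgC C a b a b
  | refl {x} (hx : C x) : CgC C a b x x
  | symm {x y} : CgC C a b x y → CgC C a b y x
  | trans {x y z} : CgC C a b x y → CgC C a b y z → CgC C a b x z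
  | cmt {x x' y y'} : CgC C a b x x' → CgC C a b y y' → CgC C a b (vmt x y) (vmt x' y')
  | cJ {x x' y y' w w'} : CgC C a b x x' → CgC C a b y y' → CgC C a b w w' →
      CgC C a b (vJ x y w) (vJ x' y' w')
  | cJ' {x x' y y' w w'} : CgC C a b x x' → CgC C a b y y' → CgC C a b w w' →
      CgC C a b (vJ' x y w) (vJ' x' y' w')

/-- Unary polynomials of the algebra with universe `C`: functions built by composition from
the operations `∧`, `J`, `J'`, constants from `C`, and the identity. -/
inductive PolyC {n : ℕ} (C : (Fin n → Mc) → Prop) : ((Fin n → Mc) → (Fin n → Mc)) → Prop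
  | id : PolyC C id
  | const {c} (h : C c) : PolyC C (fun _ => c)
  | pmt {f g} : PolyC C f → PolyC C g → PolyC C (fun x => vmt (f x) (g x))
  | pJ {f g h} : PolyC C f → PolyC C g → PolyC C h → PolyC C (fun x => vJ (f x) (g x) (h x))
  | pJ' {f g h} : PolyC C f → PolyC C g → PolyC C h → PolyC C (fun x => vJ' (f x) (g x) (h x))

/-- Fundamental translations of the algebra with universe `C`: unary polynomials obtained from
one of the operations `∧`, `J`, `J'` by fixing all but one argument at constants from `C`. -/
inductive FT {n : ℕ} (C : (Fin n → Mc) → Prop) : ((Fin n → Mc) → (Fin n → Mc)) → Prop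
  | mtL {c} (h : C c) : FT C (fun x => vmt x c)
  | mtR {c} (h : C c) : FT C (fun x => vmt c x)
  | J1 {c d} (hc : C c) (hd : C d) : FT C (fun x => vJ x c d)
  | J2 {c d} (hc : C c) (hd : C d) : FT C (fun x => vJ c x d)
  | J3 {c d} (hc : C c) (hd : C d) : FT C (fun x => vJ c d x)
  | J'1 {c d} (hc : C c) (hd : C d) : FT C (fun x => vJ' x c d)
  | J'2 {c d} (hc : C c) (hd : C d) : FT C (fun x => vJ' c x d)
  | J'3 {c d} (hc : C c) (hd : C d) : FT C (fun x => vJ' c d x)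

/-- The support of a tuple: the set of coordinates where it is nonzero. -/
def suppF {n : ℕ} (x : Fin n → Mc) : Finset (Fin n) :=
  Finset.univ.filter (fun l => x l ≠ Mc.z)

/-!
Every element of `B_n` has `D` in its first coordinate and is `0` after any coordinate
holding `∂D`. Start from `a` and `0`, which differ only in the first coordinate; every
fundamental translation acts coordinatewise, so all later values still differ only there.
Hence a translation `x ↦ J(c, d, x)` cannot separate them (`J(D, D, -) = D`), and every
other fundamental translation sends the support of `x` into itself, except `x ↦ J'(c, d, x)`,
which may add the coordinates where `c = ∂d ≠ 0`; for `c, d ∈ B_n` there is at most one.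
So each step enlarges the support by at most one, and going from `|supp a| = 1` to
`|supp b_n| = n` takes at least `n - 1` steps.
-/

instance : Fintype Mc := ⟨{Mc.z, Mc.D, Mc.pD}, by intro x; cases x <;> simp⟩

namespace Mc

lemma mmt_ne_z_left : ∀ x y : Mc, mmt x y ≠ z → x ≠ z := by decide
lemma mmt_ne_z_right : ∀ x y : Mc, mmt x y ≠ z → y ≠ z := by decide
lemma mJ_ne_z_left : ∀ x y w : Mc, mJ x y w ≠ z → x ≠ z := by decide
lemma mJ_ne_z_mid : ∀ x y w : Mc, mJ x y w ≠ z → y ≠ z := by decide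
lemma mJ'_ne_z_left : ∀ x y w : Mc, mJ' x y w ≠ z → x ≠ z := by decide
lemma mJ'_ne_z_mid : ∀ x y w : Mc, mJ' x y w ≠ z → y ≠ z := by decide
lemma mJ'_ne_z_right : ∀ x y w : Mc, mJ' x y w ≠ z → w ≠ z ∨ (x = pd y ∧ x ≠ z) := by decide

lemma eq_pD_of_mmt_eq_pD : ∀ x y : Mc, mmt x y = pD → x = pD := by decide
lemma eq_pD_of_mJ_eq_pD : ∀ x y w : Mc, mJ x y w = pD → x = pD := by decide
lemma eq_pD_of_mJ'_eq_pD : ∀ x y w : Mc, mJ' x y w = pD → x = pD := by decide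

lemma eq_pD_or_eq_pD_of_eq_pd : ∀ x y : Mc, x = pd y → x ≠ z → x = pD ∨ y = pD := by decide
lemma ne_z_of_eq_pd : ∀ x y : Mc, x = pd y → x ≠ z → y ≠ z := by decide

end Mc

open Mc

lemma mem_suppF {n : ℕ} {x : Fin n → Mc} {l : Fin n} : l ∈ suppF x ↔ x l ≠ z := by
  simp [suppF]

lemma suppF_subset_suppF {n : ℕ} {x y : Fin n → Mc} (h : ∀ l, x l ≠ z → y l ≠ z) :
    suppF x ⊆ suppF y :=
  fun l hl => mem_suppF.2 (h l (mem_suppF.1 hl))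

def pdCoords {n : ℕ} (c d : Fin n → Mc) : Finset (Fin n) :=
  Finset.univ.filter fun l => c l = pd (d l) ∧ c l ≠ z

lemma suppF_vJ'_subset {n : ℕ} (c d x : Fin n → Mc) :
    suppF (vJ' c d x) ⊆ suppF x ∪ pdCoords c d := by
  intro l hl
  rcases mJ'_ne_z_right _ _ _ (mem_suppF.1 hl) with hx | hcd
  · exact Finset.mem_union_left _ (mem_suppF.2 hx)
  · exact Finset.mem_union_right _ (by simpa [pdCoords] using hcd)

namespace Bn

variable {n : ℕ} {x : Fin n → Mc}

lemma apply_eq_D (hx : Bn n x) {l : Fin n} (hl : l.val = 0) : x l = D := by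
  induction hx with
  | gen_a => exact if_pos (by omega)
  | gen_b => exact if_pos (by omega)
  | gen_d => exact if_pos (by omega)
  | cmt _ _ ihx ihy => simp [vmt, ihx, ihy, mmt]
  | cJ _ _ _ ihx ihy => simp [vJ, ihx, ihy, mJ]
  | cJ' _ _ _ ihx ihy ihw => simp [vJ', ihx, ihy, ihw, mJ', mmt]

lemma apply_eq_z_of_lt (hx : Bn n x) {l l' : Fin n} (hl : x l = pD) (hlt : l.val < l'.val) :
    x l' = z := by
  induction hx with
  | gen_a => simp only [va, vb] at hl; split_ifs at hl
  | gen_b => simp only [vb] at hl; split_ifs at hl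
  | gen_d => simp only [vd] at hl ⊢; split_ifs at hl ⊢ <;> first | rfl | omega
  | cmt _ _ ihx => simp [vmt, ihx (eq_pD_of_mmt_eq_pD _ _ hl), mmt]
  | cJ _ _ _ ihx => simp [vJ, ihx (eq_pD_of_mJ_eq_pD _ _ _ hl), mJ, mmt]
  | cJ' _ _ _ ihx => simp [vJ', ihx (eq_pD_of_mJ'_eq_pD _ _ _ hl), mJ', mmt]

end Bn

lemma card_pdCoords_le_one {n : ℕ} {c d : Fin n → Mc} (hc : Bn n c) (hd : Bn n d) :
    (pdCoords c d).card ≤ 1 := by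
  have not_lt : ∀ l ∈ pdCoords c d, ∀ l' ∈ pdCoords c d, ¬ l.val < l'.val := by
    intro l hl l' hl' hlt
    simp only [pdCoords, Finset.mem_filter, Finset.mem_univ, true_and] at hl hl'
    rcases eq_pD_or_eq_pD_of_eq_pd _ _ hl.1 hl.2 with hcl | hdl
    · exact hl'.2 (hc.apply_eq_z_of_lt hcl hlt)
    · exact ne_z_of_eq_pd _ _ hl'.1 hl'.2 (hd.apply_eq_z_of_lt hdl hlt)
  refine Finset.card_le_one.2 fun l hl l' hl' => Fin.ext ?_
  have := not_lt l hl l' hl'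
  have := not_lt l' hl' l hl
  omega

namespace FT

variable {n : ℕ} {g : (Fin n → Mc) → (Fin n → Mc)}

lemma apply_eq_apply {C : (Fin n → Mc) → Prop} (hg : FT C g) {r s : Fin n → Mc} {l : Fin n}
    (h : r l = s l) : g r l = g s l := by
  cases hg <;> simp [vmt, vJ, vJ', h]

lemma foldr_apply_eq_apply {C : (Fin n → Mc) → Prop} {L : List ((Fin n → Mc) → (Fin n → Mc))}
    (hL : ∀ g ∈ L, FT C g) {r s : Fin n → Mc} {l : Fin n} (h : r l = s l) :
    L.foldr (· ∘ ·) id r l = L.foldr (· ∘ ·) id s l := by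
  induction L with
  | nil => exact h
  | cons g L ih =>
    exact (hL g List.mem_cons_self).apply_eq_apply
      (ih fun g hg => hL g (List.mem_cons_of_mem _ hg))

lemma card_suppF_le (hg : FT (Bn n) g) {r s : Fin n → Mc}
    (hrs : ∀ l : Fin n, l.val ≠ 0 → r l = s l) (hne : g r ≠ g s) :
    (suppF (g r)).card ≤ (suppF r).card + 1 := by
  have of_subset {x y : Fin n → Mc} (h : ∀ l, x l ≠ z → y l ≠ z) :
      (suppF x).card ≤ (suppF y).card + 1 :=
    (Finset.card_le_card (suppF_subset_suppF h)).trans (Nat.le_succ _)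
  cases hg with
  | mtL => exact of_subset fun l => mmt_ne_z_left _ _
  | mtR => exact of_subset fun l => mmt_ne_z_right _ _
  | J1 => exact of_subset fun l => mJ_ne_z_left _ _ _
  | J2 => exact of_subset fun l => mJ_ne_z_mid _ _ _
  | J'1 => exact of_subset fun l => mJ'_ne_z_left _ _ _
  | J'2 => exact of_subset fun l => mJ'_ne_z_mid _ _ _
  | @J3 c d hc hd =>
    refine absurd (funext fun l => ?_) hne
    by_cases hl : l.val = 0
    · simp [vJ, mJ, hc.apply_eq_D hl, hd.apply_eq_D hl]
    · simp [vJ, hrs l hl]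
  | @J'3 c d hc hd =>
    calc (suppF (vJ' c d r)).card ≤ (suppF r ∪ pdCoords c d).card :=
          Finset.card_le_card (suppF_vJ'_subset c d r)
      _ ≤ (suppF r).card + (pdCoords c d).card := Finset.card_union_le _ _
      _ ≤ (suppF r).card + 1 := by grw [card_pdCoords_le_one hc hd]

lemma card_suppF_foldr_le {L : List ((Fin n → Mc) → (Fin n → Mc))} (hL : ∀ g ∈ L, FT (Bn n) g)
    {r s : Fin n → Mc} (hrs : ∀ l : Fin n, l.val ≠ 0 → r l = s l)
    (hne : L.foldr (· ∘ ·) id r ≠ L.foldr (· ∘ ·) id s) :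
    (suppF (L.foldr (· ∘ ·) id r)).card ≤ (suppF r).card + L.length := by
  induction L with
  | nil => simp
  | cons g L ih =>
    have hL' : ∀ g ∈ L, FT (Bn n) g := fun g hg => hL g (List.mem_cons_of_mem _ hg)
    have hne' : L.foldr (· ∘ ·) id r ≠ L.foldr (· ∘ ·) id s := fun h => hne (by simp [h])
    have hstep := (hL g List.mem_cons_self).card_suppF_le (r := L.foldr (· ∘ ·) id r)
      (fun l hl => foldr_apply_eq_apply hL' (hrs l hl)) hne
    simp only [List.foldr_cons, Function.comp_apply, List.length_cons] at hstep ⊢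
    have := ih hL' hne'
    omega

end FT

lemma card_suppF_va_le_one (n : ℕ) : (suppF (va n)).card ≤ 1 := by
  have val_eq_zero : ∀ l ∈ suppF (va n), l.val = 0 := fun l hl => by
    by_contra h
    exact mem_suppF.1 hl (if_neg (by omega))
  exact Finset.card_le_one.2 fun l hl l' hl' =>
    Fin.ext ((val_eq_zero l hl).trans (val_eq_zero l' hl').symm)

lemma suppF_vb_self (n : ℕ) : suppF (vb n n) = Finset.univ := by
  ext l
  simp [mem_suppF, vb]

theorem maltsev_depth_lower_bound_general {n : ℕ}
    (L : List ((Fin n → Mc) → (Fin n → Mc)))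
    (hL : ∀ g ∈ L, FT (Bn n) g)
    (f : (Fin n → Mc) → (Fin n → Mc))
    (hf : f = L.foldr (· ∘ ·) id)
    (ha : f (va n) = vb n n)
    (hne : f (va n) ≠ f (vz n)) :
    n - 1 ≤ L.length := by
  subst hf
  have hagree : ∀ l : Fin n, l.val ≠ 0 → va n l = vz n l := fun l hl => if_neg (by omega)
  have hchain := FT.card_suppF_foldr_le hL hagree hne
  rw [ha, suppF_vb_self, Finset.card_univ, Fintype.card_fin] at hchain
  have := card_suppF_va_le_one n
  omega

/-- If `f = f_m ∘ ⋯ ∘ f_1` is a composition of fundamental translations of `B_n` with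
`f(a) = b_n` and `f(a) ≠ f(0)`, then `m ≥ n − 1`; so the Maltsev depth of `B_n` is at
least `n − 1`. -/
theorem maltsev_depth_lower_bound {n : ℕ} (hn : 2 ≤ n)
    (L : List ((Fin n → Mc) → (Fin n → Mc)))
    (hL : ∀ g ∈ L, FT (Bn n) g)
    (f : (Fin n → Mc) → (Fin n → Mc))
    (hf : f = L.foldr (· ∘ ·) id)
    (ha : f (va n) = vb n n)
    (hne : f (va n) ≠ f (vz n)) :
    n - 1 ≤ L.length :=
  maltsev_depth_lower_bound_general L hL f hf ha hne
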